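/- arXiv:2409.15008 — 4 statements merged into one kernel-verified Lean document; each statement's English description precedes it below -/
import Mathlib

section
/- Let E and F be real inner product spaces, let T : E → F be a linear map, let 0 ≤ δ ≤ 1, and let u, v ∈ E with ‖u‖ ≤ 1 and ‖v‖ ≤ 1. If T is a δ-isometry on the subspace span{u, v}, then |⟨T u, T v⟩ − ⟨u, v⟩| ≤ 3δ. -/
open scoped RealInnerProductSpace

/-- **Sketching preserves inner products (polarization step).**
If a linear map `T` between real inner product spaces is a `δ`-isometry on the
subspace spanned by unit-ball vectors `u` and `v` (with `0 ≤ δ ≤ 1`), then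
`|⟨T u, T v⟩ − ⟨u, v⟩| ≤ 3δ`. -/
theorem sketching_preserves_inner_product
    {E F : Type*} [NormedAddCommGroup E] [InnerProductSpace ℝ E]
    [NormedAddCommGroup F] [InnerProductSpace ℝ F]
    (T : E →ₗ[ℝ] F) (δ : ℝ) (hδ0 : 0 ≤ δ) (hδ1 : δ ≤ 1)
    (u v : E) (hu : ‖u‖ ≤ 1) (hv : ‖v‖ ≤ 1)
    (hT : ∀ w ∈ Submodule.span ℝ ({u, v} : Set E),
      (1 - δ) * ‖w‖ ≤ ‖T w‖ ∧ ‖T w‖ ≤ (1 + δ) * ‖w‖) :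
    abs (⟪T u, T v⟫ - ⟪u, v⟫) ≤ 3 * δ := by
  have humem : u ∈ Submodule.span ℝ ({u, v} : Set E) :=
    Submodule.subset_span (by simp)
  have hvmem : v ∈ Submodule.span ℝ ({u, v} : Set E) :=
    Submodule.subset_span (by simp)
  have key : ∀ w ∈ Submodule.span ℝ ({u, v} : Set E),
      |‖T w‖ ^ 2 - ‖w‖ ^ 2| ≤ (2 * δ + δ ^ 2) * ‖w‖ ^ 2 := by
    intro w hw
    obtain ⟨h1, h2⟩ := hT w hw
    have hn : (0:ℝ) ≤ ‖w‖ := norm_nonneg w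
    have hn' : (0:ℝ) ≤ ‖T w‖ := norm_nonneg _
    rw [abs_le]
    constructor <;> nlinarith [sq_nonneg ‖w‖, sq_nonneg δ]
  have hadd := key (u + v) (Submodule.add_mem _ humem hvmem)
  have hsub := key (u - v) (Submodule.sub_mem _ humem hvmem)
  rw [map_add] at hadd
  rw [map_sub] at hsub
  have hpolE : 4 * ⟪u, v⟫ = ‖u + v‖ ^ 2 - ‖u - v‖ ^ 2 := by
    have h1 := norm_add_sq_real u v
    have h2 := norm_sub_sq_real u v
    linarith
  have hpolF : 4 * ⟪T u, T v⟫ = ‖T u + T v‖ ^ 2 - ‖T u - T v‖ ^ 2 := by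
    have h1 := norm_add_sq_real (T u) (T v)
    have h2 := norm_sub_sq_real (T u) (T v)
    linarith
  have hpar : ‖u + v‖ ^ 2 + ‖u - v‖ ^ 2 = 2 * (‖u‖ ^ 2 + ‖v‖ ^ 2) := by
    have := parallelogram_law_with_norm ℝ u v
    nlinarith [this]
  have hu2 : ‖u‖ ^ 2 ≤ 1 := by nlinarith [norm_nonneg u]
  have hv2 : ‖v‖ ^ 2 ≤ 1 := by nlinarith [norm_nonneg v]
  rw [abs_le] at hadd hsub ⊢
  have hAB : ‖u + v‖ ^ 2 + ‖u - v‖ ^ 2 ≤ 4 := by rw [hpar]; linarith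
  have hcnn : (0:ℝ) ≤ 2 * δ + δ ^ 2 := by positivity
  have h4 := mul_le_mul_of_nonneg_left hAB hcnn
  have hc3 : (2 * δ + δ ^ 2) * 4 ≤ 12 * δ := by nlinarith
  constructor <;> linarith [hadd.1, hadd.2, hsub.1, hsub.2]
end

section
/- Let k ≥ 1, let S : ℝ^p → ℝ^s be a linear map, let U ∈ ℝ^{p×k} have columns U¹, …, U^k each of Euclidean norm at most 1, let v ∈ ℝ^p with ‖v‖₂ ≤ 1, and let 0 ≤ ε ≤ 1. If for every i ∈ {1,…,k} the map S is an (ε/(3√k))-isometry on the subspace span{Uⁱ, v}, then | ‖(S U)ᵀ (S v)‖₂ − ‖Uᵀ v‖₂ | ≤ ε, where S U denotes the matrix whose i-th column is S(Uⁱ). -/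
open scoped RealInnerProductSpace

/-! Polarization turns the near-isometry of `S` on `span {Uⁱ, v}` into an additive error
`3δ = ε / √k` on each coordinate `⟪S Uⁱ, S v⟫ - ⟪Uⁱ, v⟫`; summing squares over the `k` coordinates
bounds `‖(SU)ᵀ(Sv) - Uᵀv‖` by `ε`, and the reverse triangle inequality finishes. -/

def IsApproxIsometryOn {E F : Type*} [NormedAddCommGroup E] [InnerProductSpace ℝ E]
    [NormedAddCommGroup F] [InnerProductSpace ℝ F]
    (T : E →ₗ[ℝ] F) (δ : ℝ) (W : Submodule ℝ E) : Prop :=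
  ∀ w ∈ W, (1 - δ) * ‖w‖ ≤ ‖T w‖ ∧ ‖T w‖ ≤ (1 + δ) * ‖w‖

lemma abs_sq_sub_sq_le_three_mul {δ a b : ℝ} (hδ0 : 0 ≤ δ) (hδ1 : δ ≤ 1) (ha : 0 ≤ a)
    (hb : 0 ≤ b) (hlow : (1 - δ) * a ≤ b) (hupp : b ≤ (1 + δ) * a) :
    |b ^ 2 - a ^ 2| ≤ 3 * δ * a ^ 2 := by
  have hdiff : |b - a| ≤ δ * a := abs_le.2 ⟨by linarith, by linarith⟩
  have hsum : b + a ≤ 3 * a := by nlinarith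
  calc |b ^ 2 - a ^ 2| = |b - a| * (b + a) := by
        rw [sq_sub_sq, abs_mul, abs_of_nonneg (add_nonneg hb ha), mul_comm]
    _ ≤ δ * a * (3 * a) := by gcongr
    _ = 3 * δ * a ^ 2 := by ring

namespace IsApproxIsometryOn

variable {E F : Type*} [NormedAddCommGroup E] [InnerProductSpace ℝ E]
  [NormedAddCommGroup F] [InnerProductSpace ℝ F]
  {T : E →ₗ[ℝ] F} {δ : ℝ} {W : Submodule ℝ E}

lemma abs_norm_sq_sub_le (hT : IsApproxIsometryOn T δ W) (hδ0 : 0 ≤ δ) (hδ1 : δ ≤ 1)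
    {w : E} (hw : w ∈ W) : |‖T w‖ ^ 2 - ‖w‖ ^ 2| ≤ 3 * δ * ‖w‖ ^ 2 :=
  abs_sq_sub_sq_le_three_mul hδ0 hδ1 (norm_nonneg _) (norm_nonneg _) (hT w hw).1 (hT w hw).2

/-- Polarization: `4 ⟪u, v⟫ = ‖u + v‖² - ‖u - v‖²`, and `‖u + v‖² + ‖u - v‖² = 2 (‖u‖² + ‖v‖²)`. -/
lemma abs_inner_sub_le (hT : IsApproxIsometryOn T δ W) (hδ0 : 0 ≤ δ) (hδ1 : δ ≤ 1)
    {u v : E} (hu : u ∈ W) (hv : v ∈ W) :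
    |⟪T u, T v⟫ - ⟪u, v⟫| ≤ 3 / 2 * δ * (‖u‖ ^ 2 + ‖v‖ ^ 2) := by
  have hadd := hT.abs_norm_sq_sub_le hδ0 hδ1 (W.add_mem hu hv)
  have hsub := hT.abs_norm_sq_sub_le hδ0 hδ1 (W.sub_mem hu hv)
  rw [map_add] at hadd
  rw [map_sub] at hsub
  have hpolar : ⟪T u, T v⟫ - ⟪u, v⟫ =
      ((‖T u + T v‖ ^ 2 - ‖u + v‖ ^ 2) - (‖T u - T v‖ ^ 2 - ‖u - v‖ ^ 2)) / 4 := by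
    rw [norm_add_sq_real, norm_sub_sq_real, norm_add_sq_real, norm_sub_sq_real]
    ring
  have hpar : ‖u + v‖ ^ 2 + ‖u - v‖ ^ 2 = 2 * (‖u‖ ^ 2 + ‖v‖ ^ 2) := by
    simpa [sq] using parallelogram_law_with_norm ℝ u v
  rw [hpolar, abs_div, abs_of_pos (by norm_num : (0 : ℝ) < 4)]
  calc |(‖T u + T v‖ ^ 2 - ‖u + v‖ ^ 2) - (‖T u - T v‖ ^ 2 - ‖u - v‖ ^ 2)| / 4
      ≤ (3 * δ * ‖u + v‖ ^ 2 + 3 * δ * ‖u - v‖ ^ 2) / 4 := by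
        gcongr
        exact (abs_sub _ _).trans (add_le_add hadd hsub)
    _ = 3 / 2 * δ * (‖u‖ ^ 2 + ‖v‖ ^ 2) := by linear_combination 3 / 4 * δ * hpar

end IsApproxIsometryOn

lemma EuclideanSpace.norm_le_sqrt_card_mul {ι : Type*} [Fintype ι] {x : EuclideanSpace ℝ ι}
    {c : ℝ} (hc : ∀ i, |x i| ≤ c) : ‖x‖ ≤ √(Fintype.card ι) * c := by
  rw [EuclideanSpace.norm_eq]
  calc √(∑ i, ‖x i‖ ^ 2) ≤ √(∑ _ : ι, c ^ 2) := by
        gcongr with i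
        exact (Real.norm_eq_abs _).trans_le (hc i)
    _ = √(Fintype.card ι) * c := by
        rcases isEmpty_or_nonempty ι with hι | hι
        · simp
        · rw [Finset.sum_const, Finset.card_univ, nsmul_eq_mul, Real.sqrt_mul (Nat.cast_nonneg _),
            Real.sqrt_sq ((abs_nonneg _).trans (hc hι.some))]

/-- **Lemma 1 (Sketching low-rank matrices), deterministic core.**
If `S` is an `(ε/(3√k))`-isometry on each subspace `span{Uⁱ, v}`, where the columns
`Uⁱ` of `U` and the query `v` have norm at most one, then
`| ‖(SU)ᵀ(Sv)‖₂ − ‖Uᵀv‖₂ | ≤ ε`. -/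
theorem sketched_matvec_norm_close
    {p s k : ℕ} (hk : 1 ≤ k)
    (S : EuclideanSpace ℝ (Fin p) →ₗ[ℝ] EuclideanSpace ℝ (Fin s))
    (U : Fin k → EuclideanSpace ℝ (Fin p)) (hU : ∀ i, ‖U i‖ ≤ 1)
    (v : EuclideanSpace ℝ (Fin p)) (hv : ‖v‖ ≤ 1)
    (ε : ℝ) (hε0 : 0 ≤ ε) (hε1 : ε ≤ 1)
    (hS : ∀ i : Fin k, ∀ w ∈ Submodule.span ℝ ({U i, v} : Set (EuclideanSpace ℝ (Fin p))),
      (1 - ε / (3 * Real.sqrt k)) * ‖w‖ ≤ ‖S w‖ ∧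
        ‖S w‖ ≤ (1 + ε / (3 * Real.sqrt k)) * ‖w‖) :
    abs (‖(EuclideanSpace.equiv (Fin k) ℝ).symm (fun i => ⟪S (U i), S v⟫)‖
        - ‖(EuclideanSpace.equiv (Fin k) ℝ).symm (fun i => ⟪U i, v⟫)‖) ≤ ε := by
  have hsqrt : 1 ≤ √(k : ℝ) := Real.one_le_sqrt.2 (by exact_mod_cast hk)
  set δ := ε / (3 * √(k : ℝ))
  have hδ0 : 0 ≤ δ := by positivity
  have hδ1 : δ ≤ 1 := by
    rw [div_le_one (by positivity)]
    nlinarith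
  have hcoord : ∀ i, |⟪S (U i), S v⟫ - ⟪U i, v⟫| ≤ 3 * δ := fun i => by
    have hUi := Submodule.subset_span (R := ℝ) (Set.mem_insert (U i) {v})
    have hvi := Submodule.subset_span (R := ℝ) (Set.mem_insert_of_mem (U i) (Set.mem_singleton v))
    calc |⟪S (U i), S v⟫ - ⟪U i, v⟫| ≤ 3 / 2 * δ * (‖U i‖ ^ 2 + ‖v‖ ^ 2) :=
          IsApproxIsometryOn.abs_inner_sub_le (hS i) hδ0 hδ1 hUi hvi
      _ ≤ 3 / 2 * δ * (1 + 1) := by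
          gcongr
          · exact pow_le_one₀ (norm_nonneg _) (hU i)
          · exact pow_le_one₀ (norm_nonneg _) hv
      _ = 3 * δ := by ring
  calc _ ≤ ‖(EuclideanSpace.equiv (Fin k) ℝ).symm (fun i => ⟪S (U i), S v⟫)
        - (EuclideanSpace.equiv (Fin k) ℝ).symm (fun i => ⟪U i, v⟫)‖ := abs_norm_sub_norm_le _ _
    _ ≤ √(Fintype.card (Fin k) : ℝ) * (3 * δ) :=
        EuclideanSpace.norm_le_sqrt_card_mul fun i => by simpa using hcoord i
    _ = ε := by simp only [Fintype.card_fin, δ]; field_simp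
end

section
/- Let 0 ≤ ε < 1 and let Ū ∈ ℝ^{p×k} satisfy (1 − ε)·‖y‖ ≤ ‖Ū y‖ ≤ (1 + ε)·‖y‖ for all y ∈ ℝ^k. Let U ∈ ℝ^{p×k} have orthonormal columns (Uᵀ U = I_k) with column space equal to the column space of Ū. Then ‖U Uᵀ − Ū Ūᵀ‖₂ ≤ 3ε, where ‖·‖₂ is the spectral (ℓ2 operator) norm. -/
/-!
`D = UUᵀ - ŪŪᵀ` is symmetric, so its spectral norm is the supremum of `|⟪D x, x⟫|` over unit
vectors. Since `Ūᵀ` vanishes on the orthogonal complement of `col Ū = col U`, the projection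
`v = UUᵀ x` gives `⟪D x, x⟫ = ‖v‖² - ‖Ūᵀ v‖²`. On `col Ū` the adjoint `Ūᵀ` inherits the bounds
`(1 ± ε)` of `Ū`, hence `|‖v‖² - ‖Ūᵀ v‖²| ≤ (2ε + ε²) ‖v‖² ≤ 3ε ‖x‖²`.
-/

open Matrix
open scoped Matrix.Norms.L2Operator InnerProductSpace

theorem abs_sq_sub_sq_le_of_mem_Icc {ε t s : ℝ} (hε0 : 0 ≤ ε) (hε1 : ε ≤ 1) (ht : 0 ≤ t)
    (hs : s ∈ Set.Icc ((1 - ε) * t) ((1 + ε) * t)) : |t ^ 2 - s ^ 2| ≤ 3 * ε * t ^ 2 := by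
  obtain ⟨hlo, hhi⟩ := hs
  have hlo_sq : ((1 - ε) * t) ^ 2 ≤ s ^ 2 := pow_le_pow_left₀ (by nlinarith) hlo 2
  have hhi_sq : s ^ 2 ≤ ((1 + ε) * t) ^ 2 := pow_le_pow_left₀ (by nlinarith) hhi 2
  rw [abs_le]
  constructor <;> nlinarith [mul_nonneg hε0 (sq_nonneg t),
    mul_le_mul_of_nonneg_right hε1 (mul_nonneg hε0 (sq_nonneg t))]

namespace ContinuousLinearMap

open RCLike

variable {𝕜 E F : Type*} [RCLike 𝕜]
  [NormedAddCommGroup E] [InnerProductSpace 𝕜 E] [NormedAddCommGroup F] [InnerProductSpace 𝕜 F]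

theorem norm_le_of_abs_re_inner_self_le {T : E →L[𝕜] E} (hT : (T : E →ₗ[𝕜] E).IsSymmetric)
    {c : ℝ} (hc : 0 ≤ c) (h : ∀ x, |re ⟪T x, x⟫_𝕜| ≤ c * ‖x‖ ^ 2) : ‖T‖ ≤ c := by
  rw [T.norm_eq_iSup_rayleighQuotient hT]
  refine ciSup_le fun x => ?_
  rcases eq_or_ne x 0 with rfl | hx
  · simpa using hc
  rw [rayleighQuotient, reApplyInnerSelf_apply, abs_div, abs_sq, div_le_iff₀ (by positivity)]
  exact h x

variable [CompleteSpace E] [CompleteSpace F]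

theorem re_inner_comp_adjoint_apply_self (A : F →L[𝕜] E) (x : E) :
    re ⟪(A ∘L adjoint A) x, x⟫_𝕜 = ‖adjoint A x‖ ^ 2 := by
  rw [comp_apply, ← adjoint_inner_right, inner_self_eq_norm_sq]

theorem mul_norm_le_norm_adjoint_apply {B : F →L[𝕜] E} {c : ℝ} (hB : ∀ y, c * ‖y‖ ≤ ‖B y‖)
    {v : E} (hv : v ∈ B.range) : c * ‖v‖ ≤ ‖adjoint B v‖ := by
  obtain ⟨z, rfl : B z = v⟩ := hv
  rcases le_or_gt c 0 with hc | hc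
  · exact (mul_nonpos_of_nonpos_of_nonneg hc (norm_nonneg _)).trans (norm_nonneg _)
  have hsq : ‖B z‖ ^ 2 ≤ ‖z‖ * ‖adjoint B (B z)‖ := by
    rw [← inner_self_eq_norm_sq (𝕜 := 𝕜), ← adjoint_inner_right]
    exact (re_le_norm _).trans (norm_inner_le_norm _ _)
  rcases (norm_nonneg (B z)).eq_or_lt with h0 | h0
  · simp [← h0]
  refine le_of_mul_le_mul_left ?_ h0
  calc ‖B z‖ * (c * ‖B z‖) = c * ‖B z‖ ^ 2 := by ring
    _ ≤ c * (‖z‖ * ‖adjoint B (B z)‖) := by gcongr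
    _ = c * ‖z‖ * ‖adjoint B (B z)‖ := by ring
    _ ≤ ‖B z‖ * ‖adjoint B (B z)‖ := by gcongr; exact hB z

theorem comp_adjoint_comp_of_range_le {Q B : F →L[𝕜] E} (hQ : adjoint Q ∘L Q = 1)
    (h : B.range ≤ Q.range) : Q ∘L adjoint Q ∘L B = B := by
  ext y
  obtain ⟨a, ha : Q a = B y⟩ := h ⟨y, rfl⟩
  rw [comp_apply, comp_apply, ← ha, ← comp_apply (adjoint Q) Q, hQ, one_apply_eq_self]

theorem adjoint_comp_comp_adjoint_of_range_le {Q B : F →L[𝕜] E} (hQ : adjoint Q ∘L Q = 1)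
    (h : B.range ≤ Q.range) : adjoint B ∘L Q ∘L adjoint Q = adjoint B := by
  conv_rhs => rw [← comp_adjoint_comp_of_range_le hQ h]
  simp only [adjoint_comp, adjoint_adjoint, comp_assoc]

theorem norm_comp_adjoint_sub_comp_adjoint_le {Q B : F →L[𝕜] E} {ε : ℝ}
    (hε0 : 0 ≤ ε) (hε1 : ε ≤ 1) (hB : ∀ y, (1 - ε) * ‖y‖ ≤ ‖B y‖ ∧ ‖B y‖ ≤ (1 + ε) * ‖y‖)
    (hQ : adjoint Q ∘L Q = 1) (hrange : Q.range = B.range) :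
    ‖Q ∘L adjoint Q - B ∘L adjoint B‖ ≤ 3 * ε := by
  have hQ_isometry : ∀ y, ‖Q y‖ = ‖y‖ := Q.norm_map_iff_adjoint_comp_self.mpr hQ
  have hQ_norm : ‖adjoint Q‖ ≤ 1 := by
    rw [LinearIsometryEquiv.norm_map]
    exact opNorm_le_bound _ zero_le_one fun y => by rw [hQ_isometry, one_mul]
  have hB_norm : ‖adjoint B‖ ≤ 1 + ε := by
    rw [LinearIsometryEquiv.norm_map]
    exact opNorm_le_bound _ (by linarith) fun y => (hB y).2
  have hsymm : ((Q ∘L adjoint Q - B ∘L adjoint B : E →L[𝕜] E) : E →ₗ[𝕜] E).IsSymmetric :=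
    (Q.isPositive_self_comp_adjoint.isSelfAdjoint.sub
      B.isPositive_self_comp_adjoint.isSelfAdjoint).isSymmetric
  refine norm_le_of_abs_re_inner_self_le hsymm (by positivity) fun x => ?_
  set v := Q (adjoint Q x)
  have hv : v ∈ B.range := hrange ▸ ⟨adjoint Q x, rfl⟩
  have hBv : adjoint B x = adjoint B v :=
    congr($(adjoint_comp_comp_adjoint_of_range_le hQ hrange.ge) x).symm
  have hvx : ‖v‖ ≤ ‖x‖ := by
    rw [hQ_isometry]
    exact (le_opNorm _ _).trans (mul_le_of_le_one_left (norm_nonneg x) hQ_norm)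
  have hquad : re ⟪(Q ∘L adjoint Q - B ∘L adjoint B) x, x⟫_𝕜 = ‖v‖ ^ 2 - ‖adjoint B v‖ ^ 2 := by
    rw [_root_.sub_apply, inner_sub_left, map_sub, re_inner_comp_adjoint_apply_self,
      re_inner_comp_adjoint_apply_self, hQ_isometry, hBv]
  rw [hquad]
  calc _ ≤ 3 * ε * ‖v‖ ^ 2 :=
        abs_sq_sub_sq_le_of_mem_Icc hε0 hε1 (norm_nonneg v)
          ⟨mul_norm_le_norm_adjoint_apply (fun y => (hB y).1) hv,
            (le_opNorm _ _).trans (mul_le_mul_of_nonneg_right hB_norm (norm_nonneg v))⟩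
    _ ≤ 3 * ε * ‖x‖ ^ 2 := by gcongr

end ContinuousLinearMap

namespace Matrix

variable {𝕜 : Type*} [RCLike 𝕜] {l m n : Type*}

theorem toContinuousLinearMap_toEuclideanLin_mul [Fintype l] [Fintype m] [DecidableEq m]
    [Fintype n] [DecidableEq n] (A : Matrix l m 𝕜) (B : Matrix m n 𝕜) :
    LinearMap.toContinuousLinearMap (toEuclideanLin (A * B)) =
      LinearMap.toContinuousLinearMap (toEuclideanLin A) ∘L
        LinearMap.toContinuousLinearMap (toEuclideanLin B) := by
  rw [toLpLin_mul_same]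
  rfl

theorem toContinuousLinearMap_toEuclideanLin_conjTranspose [Fintype m] [DecidableEq m]
    [Fintype n] [DecidableEq n] (A : Matrix m n 𝕜) :
    LinearMap.toContinuousLinearMap (toEuclideanLin Aᴴ) =
      ContinuousLinearMap.adjoint (LinearMap.toContinuousLinearMap (toEuclideanLin A)) := by
  rw [toEuclideanLin_conjTranspose_eq_adjoint, LinearMap.adjoint_toContinuousLinearMap]

end Matrix

/-- **Projection comparison step of Lemma 2 (Orthogonalizing the sketch).**
If `Ū` is an `ε`-near isometry (`(1−ε)‖y‖ ≤ ‖Ū y‖ ≤ (1+ε)‖y‖` for all `y`) and `U`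
has orthonormal columns with the same column space as `Ū`, then
`‖U Uᵀ − Ū Ūᵀ‖₂ ≤ 3ε` in the spectral norm. -/
theorem projection_close_to_near_isometry_gram
    {p k : ℕ} (ε : ℝ) (hε0 : 0 ≤ ε) (hε1 : ε < 1)
    (Ubar : Matrix (Fin p) (Fin k) ℝ)
    (hUbar : ∀ y : EuclideanSpace ℝ (Fin k),
      (1 - ε) * ‖y‖ ≤ ‖Matrix.toEuclideanLin Ubar y‖ ∧
        ‖Matrix.toEuclideanLin Ubar y‖ ≤ (1 + ε) * ‖y‖)
    (U : Matrix (Fin p) (Fin k) ℝ) (hUorth : Uᵀ * U = 1)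
    (hUcol : LinearMap.range (Matrix.toEuclideanLin U)
      = LinearMap.range (Matrix.toEuclideanLin Ubar)) :
    ‖U * Uᵀ - Ubar * Ubarᵀ‖ ≤ 3 * ε := by
  simp only [← conjTranspose_eq_transpose_of_trivial] at hUorth ⊢
  have hU : ContinuousLinearMap.adjoint (LinearMap.toContinuousLinearMap (toEuclideanLin U)) ∘L
      LinearMap.toContinuousLinearMap (toEuclideanLin U) = 1 := by
    rw [← toContinuousLinearMap_toEuclideanLin_conjTranspose,
      ← toContinuousLinearMap_toEuclideanLin_mul, hUorth, toLpLin_one]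
    rfl
  rw [l2_opNorm_def, LinearEquiv.trans_apply, map_sub, map_sub,
    toContinuousLinearMap_toEuclideanLin_mul, toContinuousLinearMap_toEuclideanLin_mul,
    toContinuousLinearMap_toEuclideanLin_conjTranspose,
    toContinuousLinearMap_toEuclideanLin_conjTranspose]
  exact ContinuousLinearMap.norm_comp_adjoint_sub_comp_adjoint_le hε0 hε1.le hUbar hU hUcol
end

section
/- Let V ∈ ℝ^{p×k} have rank k, let v ∈ ℝ^p with ‖v‖₂ = 1, let 0 ≤ ε ≤ 1/2, and let S : ℝ^p → ℝ^s be a linear map that is an ε-isometry on the subspace col(V) + span{v}. Let U ∈ ℝ^{p×k} have orthonormal columns with col(U) = col(V), and let U_S ∈ ℝ^{s×k} have orthonormal columns with col(U_S) = col(S V), where S V is the matrix whose columns are S applied to the columns of V. Then | ‖U_Sᵀ (S v)‖₂ − ‖Uᵀ v‖₂ | ≤ 9ε. -/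
/-!
Let `u` be the orthogonal projection of `v` onto `W₀ = col V` and `Q` the orthogonal projection
onto `S W₀ = col (S V)`. A matrix with orthonormal columns is an isometry onto its column space, so
the two norms in the theorem are `‖Q (S v)‖` and `‖u‖`. Now `‖S u‖` is within `ε ‖u‖` of `‖u‖`,
and `d := Q (S v) - S u` lies in `S W₀`, say `d = S x` with `x ∈ W₀`. Since `S v - Q (S v) ⊥ d`,
`‖d‖² = ⟪S (v - u), S x⟫`, and polarization turns `v - u ⊥ x` into
`⟪S (v - u), S x⟫ ≤ 2 ε ‖v - u‖ ‖x‖`. As `‖x‖ ≤ 2 ‖d‖`, this gives `‖d‖ ≤ 4 ε`, so the error is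
at most `5 ε`.
-/

open Matrix RealInnerProductSpace

namespace LinearMap

section Adjoint

variable {𝕜 E F : Type*} [RCLike 𝕜] [NormedAddCommGroup E] [InnerProductSpace 𝕜 E]
  [FiniteDimensional 𝕜 E] [NormedAddCommGroup F] [InnerProductSpace 𝕜 F] [FiniteDimensional 𝕜 F]
  {A : E →ₗ[𝕜] F}

theorem norm_map_of_adjoint_comp_self (hA : A.adjoint ∘ₗ A = id) (x : E) : ‖A x‖ = ‖x‖ := by
  have h : (inner 𝕜 (A x) (A x) : 𝕜) = inner 𝕜 x x := by
    rw [← adjoint_inner_left, ← comp_apply, hA, id_apply]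
  rw [norm_eq_sqrt_re_inner (𝕜 := 𝕜), h, ← norm_eq_sqrt_re_inner]

theorem starProjection_range_of_adjoint_comp_self (hA : A.adjoint ∘ₗ A = id) (y : F) :
    (range A).starProjection y = A (A.adjoint y) := by
  refine Submodule.eq_starProjection_of_mem_of_inner_eq_zero (mem_range_self _ _) ?_
  rintro _ ⟨z, rfl⟩
  rw [inner_sub_left, ← adjoint_inner_left, ← adjoint_inner_left, ← comp_apply A.adjoint, hA,
    id_apply, sub_self]

theorem norm_adjoint_apply_of_adjoint_comp_self (hA : A.adjoint ∘ₗ A = id) (y : F) :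
    ‖A.adjoint y‖ = ‖(range A).starProjection y‖ := by
  rw [starProjection_range_of_adjoint_comp_self hA, norm_map_of_adjoint_comp_self hA]

end Adjoint

variable {E F : Type*} [NormedAddCommGroup E] [InnerProductSpace ℝ E] [NormedAddCommGroup F]
  [InnerProductSpace ℝ F]

def IsApproxIsometryOn (ε : ℝ) (S : E →ₗ[ℝ] F) (W : Submodule ℝ E) : Prop :=
  ∀ w ∈ W, (1 - ε) * ‖w‖ ≤ ‖S w‖ ∧ ‖S w‖ ≤ (1 + ε) * ‖w‖

namespace IsApproxIsometryOn

variable {ε : ℝ} {S : E →ₗ[ℝ] F} {W : Submodule ℝ E} {x y : E}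

theorem inner_map_le (hS : IsApproxIsometryOn ε S W) (hε : ε ≤ 1) (hx : x ∈ W) (hy : y ∈ W)
    (hxy : ⟪x, y⟫ = 0) : ⟪S x, S y⟫ ≤ ε * (‖x‖ ^ 2 + ‖y‖ ^ 2) := by
  have hadd : ‖x + y‖ ^ 2 = ‖x‖ ^ 2 + ‖y‖ ^ 2 := by rw [norm_add_sq_real, hxy]; ring
  have hsub : ‖x - y‖ ^ 2 = ‖x‖ ^ 2 + ‖y‖ ^ 2 := by rw [norm_sub_sq_real, hxy]; ring
  have hpolar : 4 * ⟪S x, S y⟫ = ‖S (x + y)‖ ^ 2 - ‖S (x - y)‖ ^ 2 := by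
    rw [map_add, map_sub, norm_add_sq_real, norm_sub_sq_real]; ring
  have hupper := pow_le_pow_left₀ (norm_nonneg _) (hS _ (W.add_mem hx hy)).2 2
  have hlower := pow_le_pow_left₀ (mul_nonneg (sub_nonneg.2 hε) (norm_nonneg _))
    (hS _ (W.sub_mem hx hy)).1 2
  rw [mul_pow, hadd] at hupper
  rw [mul_pow, hsub] at hlower
  linarith

theorem inner_map_le_two_mul (hS : IsApproxIsometryOn ε S W) (hε : ε ≤ 1) (hx : x ∈ W)
    (hy : y ∈ W) (hxy : ⟪x, y⟫ = 0) : ⟪S x, S y⟫ ≤ 2 * ε * ‖x‖ * ‖y‖ := by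
  rcases eq_or_ne x 0 with rfl | hx0
  · simp
  rcases eq_or_ne y 0 with rfl | hy0
  · simp
  have hxy_pos : 0 < ‖x‖ * ‖y‖ := by positivity
  have h := hS.inner_map_le hε (W.smul_mem ‖y‖ hx) (W.smul_mem ‖x‖ hy)
    (by rw [real_inner_smul_left, real_inner_smul_right, hxy]; ring)
  simp only [map_smul, real_inner_smul_left, real_inner_smul_right, norm_smul, norm_norm] at h
  refine le_of_mul_le_mul_left ?_ hxy_pos
  linarith

variable {W₀ : Submodule ℝ E} [W₀.HasOrthogonalProjection] [(W₀.map S).HasOrthogonalProjection]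
  {v : E}

theorem norm_starProjection_map_sub_le (hS : IsApproxIsometryOn ε S W) (hε₀ : 0 ≤ ε)
    (hε : ε ≤ 1 / 2) (hW₀ : W₀ ≤ W) (hv : v ∈ W) :
    ‖(W₀.map S).starProjection (S v) - S (W₀.starProjection v)‖
      ≤ 4 * ε * ‖v - W₀.starProjection v‖ := by
  set u := W₀.starProjection v
  set d := (W₀.map S).starProjection (S v) - S u
  have hu : u ∈ W₀ := W₀.starProjection_apply_mem v
  have hd : d ∈ W₀.map S :=
    Submodule.sub_mem _ (Submodule.starProjection_apply_mem _ _) (Submodule.mem_map_of_mem hu)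
  obtain ⟨x, hx, hSx⟩ := Submodule.mem_map.1 hd
  have hd_sq : ‖d‖ ^ 2 = ⟪S (v - u), S x⟫ := by
    have hsplit : S (v - u) = (S v - (W₀.map S).starProjection (S v)) + d := by
      simp only [d, map_sub]; abel
    rw [hsplit, inner_add_left, hSx, Submodule.starProjection_inner_eq_zero _ _ hd,
      zero_add, real_inner_self_eq_norm_sq]
  have hx_le : ‖x‖ ≤ 2 * ‖d‖ := by
    have := (hS x (hW₀ hx)).1
    rw [hSx] at this
    nlinarith [norm_nonneg x]
  have hinner := hS.inner_map_le_two_mul (by linarith) (W.sub_mem hv (hW₀ hu)) (hW₀ hx)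
    (W₀.starProjection_inner_eq_zero v x hx)
  have hd_sq_le : ‖d‖ ^ 2 ≤ 4 * ε * ‖v - u‖ * ‖d‖ := by
    have := mul_le_mul_of_nonneg_left hx_le (by positivity : 0 ≤ 2 * ε * ‖v - u‖)
    linarith
  rcases (norm_nonneg d).eq_or_lt with hd0 | hd0
  · rw [← hd0]; positivity
  · nlinarith

theorem abs_norm_starProjection_map_sub_le (hS : IsApproxIsometryOn ε S W) (hε₀ : 0 ≤ ε)
    (hε : ε ≤ 1 / 2) (hW₀ : W₀ ≤ W) (hv : v ∈ W) :
    |‖(W₀.map S).starProjection (S v)‖ - ‖W₀.starProjection v‖| ≤ 5 * ε * ‖v‖ := by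
  set u := W₀.starProjection v
  have hu_le : ‖u‖ ≤ ‖v‖ := W₀.norm_starProjection_apply_le v
  have hw_le : ‖v - u‖ ≤ ‖v‖ := by
    rw [← Submodule.starProjection_orthogonal_val]
    exact W₀ᗮ.norm_starProjection_apply_le v
  have hSu := hS u (hW₀ (W₀.starProjection_apply_mem v))
  have hsketch := hS.norm_starProjection_map_sub_le hε₀ hε hW₀ hv
  calc |‖(W₀.map S).starProjection (S v)‖ - ‖u‖|
      ≤ |‖(W₀.map S).starProjection (S v)‖ - ‖S u‖| + |‖S u‖ - ‖u‖| := abs_sub_le _ _ _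
    _ ≤ 4 * ε * ‖v - u‖ + ε * ‖u‖ := by
      gcongr
      · exact (abs_norm_sub_norm_le _ _).trans hsketch
      · rw [abs_le]; constructor <;> linarith
    _ ≤ 5 * ε * ‖v‖ := by nlinarith

end IsApproxIsometryOn
end LinearMap

namespace Matrix

variable {𝕜 : Type*} [RCLike 𝕜]

theorem toEuclideanLin_of_apply_col {l m n : Type*} [Fintype n] [DecidableEq n]
    (V : Matrix m n 𝕜) (S : EuclideanSpace 𝕜 m →ₗ[𝕜] EuclideanSpace 𝕜 l) :
    toEuclideanLin (of fun i j => S ((EuclideanSpace.equiv m 𝕜).symm fun r => V r j) i) =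
      S ∘ₗ toEuclideanLin V := by
  refine (EuclideanSpace.basisFun n 𝕜).toBasis.ext fun j => ?_
  have hcol : toEuclideanLin V (EuclideanSpace.single j 1) = WithLp.toLp 2 fun r => V r j := by
    ext r; simp
  ext i
  simp [hcol]

variable {m n : Type*} [Fintype m] [DecidableEq m] [Fintype n] [DecidableEq n]

theorem adjoint_toEuclideanLin_comp_self {U : Matrix m n 𝕜} (hU : Uᴴ * U = 1) :
    (toEuclideanLin U).adjoint ∘ₗ toEuclideanLin U = LinearMap.id := by
  rw [← toEuclideanLin_conjTranspose_eq_adjoint, ← toLpLin_mul, hU, toLpLin_one]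

theorem norm_toEuclideanLin_conjTranspose_apply {U : Matrix m n 𝕜} (hU : Uᴴ * U = 1)
    (y : EuclideanSpace 𝕜 m) :
    ‖toEuclideanLin Uᴴ y‖ = ‖(LinearMap.range (toEuclideanLin U)).starProjection y‖ := by
  rw [toEuclideanLin_conjTranspose_eq_adjoint,
    LinearMap.norm_adjoint_apply_of_adjoint_comp_self (adjoint_toEuclideanLin_comp_self hU)]

end Matrix

theorem orthogonalizing_the_sketch_general
    {p s k : ℕ} (V : Matrix (Fin p) (Fin k) ℝ)
    (v : EuclideanSpace ℝ (Fin p)) (hv : ‖v‖ = 1)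
    (ε : ℝ) (hε0 : 0 ≤ ε) (hε1 : ε ≤ 1 / 2)
    (S : EuclideanSpace ℝ (Fin p) →ₗ[ℝ] EuclideanSpace ℝ (Fin s))
    (hS : ∀ w ∈ LinearMap.range (Matrix.toEuclideanLin V)
        ⊔ Submodule.span ℝ {v},
      (1 - ε) * ‖w‖ ≤ ‖S w‖ ∧ ‖S w‖ ≤ (1 + ε) * ‖w‖)
    (U : Matrix (Fin p) (Fin k) ℝ) (hUorth : Uᵀ * U = 1)
    (hUcol : LinearMap.range (Matrix.toEuclideanLin U)
      = LinearMap.range (Matrix.toEuclideanLin V))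
    (SV : Matrix (Fin s) (Fin k) ℝ)
    (hSV : SV = Matrix.of fun i j =>
      S ((EuclideanSpace.equiv (Fin p) ℝ).symm fun r => V r j) i)
    (US : Matrix (Fin s) (Fin k) ℝ) (hUSorth : USᵀ * US = 1)
    (hUScol : LinearMap.range (Matrix.toEuclideanLin US)
      = LinearMap.range (Matrix.toEuclideanLin SV)) :
    abs (‖Matrix.toEuclideanLin USᵀ (S v)‖ - ‖Matrix.toEuclideanLin Uᵀ v‖) ≤ 9 * ε := by
  simp only [← conjTranspose_eq_transpose_of_trivial] at hUorth hUSorth ⊢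
  rw [norm_toEuclideanLin_conjTranspose_apply hUorth,
    norm_toEuclideanLin_conjTranspose_apply hUSorth]
  simp only [hUcol, hUScol, hSV, toEuclideanLin_of_apply_col, LinearMap.range_comp]
  calc _ ≤ 5 * ε * ‖v‖ :=
        LinearMap.IsApproxIsometryOn.abs_norm_starProjection_map_sub_le hS hε0 hε1 le_sup_left
          (Submodule.mem_sup_right (Submodule.mem_span_singleton_self v))
    _ ≤ 9 * ε := by rw [hv]; linarith

/-- **Lemma 2 (Orthogonalizing the sketch), deterministic form.**
Let `V ∈ ℝ^{p×k}` have rank `k`, let `v` be a unit vector, and let `S` be an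
`ε`-isometry on `col(V) + span{v}` with `0 ≤ ε ≤ 1/2`. If `U` is an orthonormal
basis of `col(V)` and `U_S` is an orthonormal basis of `col(SV)`, then
`| ‖U_Sᵀ (S v)‖₂ − ‖Uᵀ v‖₂ | ≤ 9ε`. -/
theorem orthogonalizing_the_sketch
    {p s k : ℕ} (V : Matrix (Fin p) (Fin k) ℝ) (hV : V.rank = k)
    (v : EuclideanSpace ℝ (Fin p)) (hv : ‖v‖ = 1)
    (ε : ℝ) (hε0 : 0 ≤ ε) (hε1 : ε ≤ 1 / 2)
    (S : EuclideanSpace ℝ (Fin p) →ₗ[ℝ] EuclideanSpace ℝ (Fin s))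
    (hS : ∀ w ∈ LinearMap.range (Matrix.toEuclideanLin V)
        ⊔ Submodule.span ℝ {v},
      (1 - ε) * ‖w‖ ≤ ‖S w‖ ∧ ‖S w‖ ≤ (1 + ε) * ‖w‖)
    (U : Matrix (Fin p) (Fin k) ℝ) (hUorth : Uᵀ * U = 1)
    (hUcol : LinearMap.range (Matrix.toEuclideanLin U)
      = LinearMap.range (Matrix.toEuclideanLin V))
    (SV : Matrix (Fin s) (Fin k) ℝ)
    (hSV : SV = Matrix.of fun i j =>
      S ((EuclideanSpace.equiv (Fin p) ℝ).symm fun r => V r j) i)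
    (US : Matrix (Fin s) (Fin k) ℝ) (hUSorth : USᵀ * US = 1)
    (hUScol : LinearMap.range (Matrix.toEuclideanLin US)
      = LinearMap.range (Matrix.toEuclideanLin SV)) :
    abs (‖Matrix.toEuclideanLin USᵀ (S v)‖ - ‖Matrix.toEuclideanLin Uᵀ v‖) ≤ 9 * ε :=
  orthogonalizing_the_sketch_general V v hv ε hε0 hε1 S hS U hUorth hUcol SV hSV US hUSorth hUScol
end
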